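/- If for each customer k with q_k > 0 there is at least one open depot j (z_j = 1) with p_j > 0, and the capacity conditions ∑_i b_i y_i ≥ ∑_k q_k, ∑_j p_j z_j ≥ ∑_k q_k hold, then the proportional-flow construction s_{jk} = q_k p_j z_j / (∑_{j'} p_{j'} z_{j'}) and x_{ij} = (∑_k s_{jk}) b_i y_i / (∑_{i'} b_{i'} y_{i'}) (with ∑_k q_k > 0) satisfies all four TSCFLP flow constraints with the demand constraints tight. -/
import Mathlib


open Finset

/-- The proportional-flow construction satisfies all four TSCFLP flow constraints,
with the demand constraints tight. -/
theorem stmt15 {I J K : Type*} [Fintype I] [Fintype J] [Fintype K]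
    (q : K → ℝ) (b : I → ℝ) (p : J → ℝ) (y : I → ℝ) (z : J → ℝ)
    (hq : ∀ k, 0 ≤ q k) (hb : ∀ i, 0 ≤ b i) (hp : ∀ j, 0 ≤ p j)
    (hy : ∀ i, y i = 0 ∨ y i = 1) (hz : ∀ j, z j = 0 ∨ z j = 1)
    (hQ : 0 < ∑ k, q k)
    (hpz : 0 < ∑ j, p j * z j) (hby : 0 < ∑ i, b i * y i)
    (hopen : ∀ k, 0 < q k → ∃ j, z j = 1 ∧ 0 < p j)
    (hcapb : ∑ k, q k ≤ ∑ i, b i * y i)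
    (hcapp : ∑ k, q k ≤ ∑ j, p j * z j)
    (s : J → K → ℝ) (x : I → J → ℝ)
    (hsdef : ∀ j k, s j k = q k * (p j * z j) / (∑ j', p j' * z j'))
    (hxdef : ∀ i j, x i j = (∑ k, s j k) * (b i * y i) / (∑ i', b i' * y i')) :
    (∀ j k, 0 ≤ s j k) ∧ (∀ i j, 0 ≤ x i j) ∧
    (∀ k, ∑ j, s j k = q k) ∧
    (∀ j, ∑ i, x i j = ∑ k, s j k) ∧
    (∀ i, ∑ j, x i j ≤ b i * y i) ∧
    (∀ j, ∑ k, s j k ≤ p j * z j) := by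

  have hzj : ∀ j, 0 ≤ z j := fun j => by rcases hz j with h | h <;> simp [h]
  have hyi : ∀ i, 0 ≤ y i := fun i => by rcases hy i with h | h <;> simp [h]
  have hsnn : ∀ j k, 0 ≤ s j k := fun j k => by
    rw [hsdef]
    exact div_nonneg (mul_nonneg (hq k) (mul_nonneg (hp j) (hzj j))) hpz.le
  have hssum : ∀ j, ∑ k, s j k = (∑ k, q k) * (p j * z j) / (∑ j', p j' * z j') := by
    intro j
    simp only [hsdef]
    rw [← Finset.sum_div, ← Finset.sum_mul]
  have hxnn : ∀ i j, 0 ≤ x i j := fun i j => by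
    rw [hxdef]
    exact div_nonneg (mul_nonneg (Finset.sum_nonneg fun k _ => hsnn j k)
      (mul_nonneg (hb i) (hyi i))) hby.le
  refine ⟨hsnn, hxnn, ?_, ?_, ?_, ?_⟩
  · intro k
    simp only [hsdef]
    rw [← Finset.sum_div, ← Finset.mul_sum, mul_div_assoc, div_self hpz.ne', mul_one]
  · intro j
    simp only [hxdef]
    rw [← Finset.sum_div, ← Finset.mul_sum, mul_div_assoc, div_self hby.ne', mul_one]
  · intro i
    simp only [hxdef]
    rw [← Finset.sum_div, ← Finset.sum_mul]
    rw [div_le_iff₀ hby]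
    calc (∑ j, ∑ k, s j k) * (b i * y i)
        ≤ (∑ i', b i' * y i') * (b i * y i) := by
          apply mul_le_mul_of_nonneg_right _ (mul_nonneg (hb i) (hyi i))
          calc ∑ j, ∑ k, s j k = ∑ k, q k := by
                rw [Finset.sum_comm]
                congr 1; ext k
                simp only [hsdef]
                rw [← Finset.sum_div, ← Finset.mul_sum, mul_div_assoc, div_self hpz.ne', mul_one]
            _ ≤ ∑ i', b i' * y i' := hcapb
      _ = b i * y i * (∑ i', b i' * y i') := by ring
  · intro j
    rw [hssum, div_le_iff₀ hpz]
    calc (∑ k, q k) * (p j * z j) ≤ (∑ j', p j' * z j') * (p j * z j) :=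
          mul_le_mul_of_nonneg_right hcapp (mul_nonneg (hp j) (hzj j))
      _ = p j * z j * (∑ j', p j' * z j') := by ring
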